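/- Let K be an algebraically closed field and let s, r ∈ K with s ≠ 0, r ≠ 0, s² ≠ 1, r² ≠ 1; set t = diag(s, s⁻¹), t' = diag(r, r⁻¹), Δ = s − s⁻¹. Then the set {(X, Y) : X is SL₂(K)-conjugate to t, Y is SL₂(K)-conjugate to t', and trace(X·Y) = s·r + s⁻¹·r⁻¹} is the union of the SL₂(K)-orbits of the three pairs ([[s, 0],[Δ, s⁻¹]], t'), ([[s, Δ],[0, s⁻¹]], t') and (t, t'), and these three orbits are pairwise disjoint. -/

import Mathlib

open Matrix

/-!
Conjugating a pair `(X, Y)` of the fiber so that `Y = t'`, the conditions `tr X = s + s⁻¹` and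
`tr (X t') = s r + s⁻¹ r⁻¹` force the diagonal of `X` to be `(s, s⁻¹)` (as `r² ≠ 1`), and then
`det X = 1` forces the off-diagonal entries `b, c` of `X` to satisfy `b c = 0`. Since `r² ≠ 1`, the
stabiliser of `t'` is the diagonal torus, and `diag(u, u⁻¹)` rescales `(b, c)` to `(u² b, u⁻² c)`.
Over an algebraically closed field a nonzero entry can thus be scaled to `Δ`, which yields the three
representatives, while which of `b`, `c` vanish is an orbit invariant, which yields disjointness.
-/

/-- `diag(s, s⁻¹) ∈ SL₂(K)` for `s ≠ 0`. -/
def diagSL {K : Type*} [Field K] (s : K) (hs : s ≠ 0) : SpecialLinearGroup (Fin 2) K :=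
  ⟨!![s, 0; 0, s⁻¹], by rw [Matrix.det_fin_two_of]; field_simp; ring⟩

/-- `[[s, Δ],[0, s⁻¹]] ∈ SL₂(K)` where `Δ = s - s⁻¹`. -/
def upSL {K : Type*} [Field K] (s : K) (hs : s ≠ 0) : SpecialLinearGroup (Fin 2) K :=
  ⟨!![s, s - s⁻¹; 0, s⁻¹], by rw [Matrix.det_fin_two_of]; field_simp; ring⟩

/-- `[[s, 0],[Δ, s⁻¹]] ∈ SL₂(K)` where `Δ = s - s⁻¹`. -/
def lowSL {K : Type*} [Field K] (s : K) (hs : s ≠ 0) : SpecialLinearGroup (Fin 2) K :=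
  ⟨!![s, 0; s - s⁻¹, s⁻¹], by rw [Matrix.det_fin_two_of]; field_simp; ring⟩

/-- The `SL₂(K)`-orbit of the pair `(P, Q)` under simultaneous conjugation. -/
def pairOrbit {K : Type*} [Field K] (P Q : SpecialLinearGroup (Fin 2) K) :
    Set (SpecialLinearGroup (Fin 2) K × SpecialLinearGroup (Fin 2) K) :=
  {pq | ∃ A : SpecialLinearGroup (Fin 2) K, pq = (A * P * A⁻¹, A * Q * A⁻¹)}

namespace Matrix.SpecialLinearGroup

variable {n R : Type*} [Fintype n] [DecidableEq n] [CommRing R]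

theorem trace_coe_conj (A M : SpecialLinearGroup n R) :
    trace (↑(A * M * A⁻¹) : Matrix n n R) = trace (M : Matrix n n R) := by
  rw [coe_mul, coe_mul, trace_mul_cycle, ← coe_mul, inv_mul_cancel, coe_one, one_mul]

theorem trace_coe_conj_mul_coe_conj (A P Q : SpecialLinearGroup n R) :
    trace ((↑(A * P * A⁻¹) : Matrix n n R) * (↑(A * Q * A⁻¹) : Matrix n n R)) =
      trace ((P : Matrix n n R) * (Q : Matrix n n R)) := by
  rw [← coe_mul, show A * P * A⁻¹ * (A * Q * A⁻¹) = A * (P * Q) * A⁻¹ by group, trace_coe_conj,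
    coe_mul]

end Matrix.SpecialLinearGroup

open Matrix.SpecialLinearGroup

section PairOrbit

variable {K : Type*} [Field K] {P Q : SpecialLinearGroup (Fin 2) K}

theorem conj_mem_pairOrbit (A : SpecialLinearGroup (Fin 2) K) {X Y : SpecialLinearGroup (Fin 2) K}
    (h : (X, Y) ∈ pairOrbit P Q) : (A * X * A⁻¹, A * Y * A⁻¹) ∈ pairOrbit P Q := by
  obtain ⟨B, hB⟩ := h
  obtain ⟨rfl, rfl⟩ := Prod.mk.inj hB
  exact ⟨A * B, by simp only [Prod.mk.injEq]; constructor <;> group⟩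

theorem mk_mem_pairOrbit_of_conj_eq {A : SpecialLinearGroup (Fin 2) K} (hQ : A * Q * A⁻¹ = Q) :
    (A * P * A⁻¹, Q) ∈ pairOrbit P Q :=
  ⟨A, by rw [hQ]⟩

theorem pairOrbit_subset_of_conj {P₀ Q₀ : SpecialLinearGroup (Fin 2) K} {c : K}
    (hP : ∃ C, P = C * P₀ * C⁻¹) (hQ : ∃ C, Q = C * Q₀ * C⁻¹)
    (hc : trace ((P : Matrix (Fin 2) (Fin 2) K) * (Q : Matrix (Fin 2) (Fin 2) K)) = c) :
    pairOrbit P Q ⊆ {pq | (∃ A, pq.1 = A * P₀ * A⁻¹) ∧ (∃ A, pq.2 = A * Q₀ * A⁻¹) ∧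
      trace ((pq.1 : Matrix (Fin 2) (Fin 2) K) * (pq.2 : Matrix (Fin 2) (Fin 2) K)) = c} := by
  rintro _ ⟨A, rfl⟩
  obtain ⟨C, rfl⟩ := hP
  obtain ⟨D, rfl⟩ := hQ
  exact ⟨⟨A * C, by group⟩, ⟨A * D, by group⟩, (trace_coe_conj_mul_coe_conj _ _ _).trans hc⟩

theorem disjoint_pairOrbit_of_forall_conj {P' : SpecialLinearGroup (Fin 2) K}
    (h : ∀ C, C * Q * C⁻¹ = Q → C * P * C⁻¹ ≠ P') :
    Disjoint (pairOrbit P Q) (pairOrbit P' Q) := by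
  refine Set.disjoint_left.mpr ?_
  rintro _ ⟨A, rfl⟩ ⟨B, hB⟩
  obtain ⟨hP, hQ⟩ := Prod.mk.inj hB
  refine h (B⁻¹ * A) ?_ ?_
  · calc B⁻¹ * A * Q * (B⁻¹ * A)⁻¹ = B⁻¹ * (A * Q * A⁻¹) * B := by group
      _ = Q := by rw [hQ]; group
  · calc B⁻¹ * A * P * (B⁻¹ * A)⁻¹ = B⁻¹ * (A * P * A⁻¹) * B := by group
      _ = P' := by rw [hP]; group

end PairOrbit

section Diagonal

variable {K : Type*} [Field K]

@[simp] theorem coe_diagSL (s : K) (hs : s ≠ 0) :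
    (diagSL s hs : Matrix (Fin 2) (Fin 2) K) = !![s, 0; 0, s⁻¹] := rfl

@[simp] theorem coe_upSL (s : K) (hs : s ≠ 0) :
    (upSL s hs : Matrix (Fin 2) (Fin 2) K) = !![s, s - s⁻¹; 0, s⁻¹] := rfl

@[simp] theorem coe_lowSL (s : K) (hs : s ≠ 0) :
    (lowSL s hs : Matrix (Fin 2) (Fin 2) K) = !![s, 0; s - s⁻¹, s⁻¹] := rfl

theorem trace_diagSL (s : K) (hs : s ≠ 0) :
    trace (diagSL s hs : Matrix (Fin 2) (Fin 2) K) = s + s⁻¹ :=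
  trace_fin_two_of _ _ _ _

theorem trace_mul_diagSL (M : SpecialLinearGroup (Fin 2) K) (r : K) (hr : r ≠ 0) :
    trace ((M : Matrix (Fin 2) (Fin 2) K) * (diagSL r hr : Matrix (Fin 2) (Fin 2) K)) =
      M 0 0 * r + M 1 1 * r⁻¹ := by
  simp [trace_fin_two, mul_apply, Fin.sum_univ_two]

theorem sub_inv_ne_zero {s : K} (hs : s ≠ 0) (hs2 : s ^ 2 ≠ 1) : s - s⁻¹ ≠ 0 := by
  intro h
  apply hs2
  linear_combination s * h + mul_inv_cancel₀ hs

theorem coe_diagSL_conj (u : K) (hu : u ≠ 0) (M : SpecialLinearGroup (Fin 2) K) :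
    (↑(diagSL u hu * M * (diagSL u hu)⁻¹) : Matrix (Fin 2) (Fin 2) K) =
      !![M 0 0, u ^ 2 * M 0 1; M 1 0 / u ^ 2, M 1 1] := by
  rw [coe_mul, coe_mul, coe_inv, coe_diagSL, adjugate_fin_two_of, eta_fin_two (M : Matrix _ _ K)]
  ext i j
  fin_cases i <;> fin_cases j <;> simp [mul_apply, Fin.sum_univ_two] <;> field_simp

theorem eq_diagSL_conj_of_apply {X M : SpecialLinearGroup (Fin 2) K} (u : K) (hu : u ≠ 0)
    (h00 : X 0 0 = M 0 0) (h01 : X 0 1 = u ^ 2 * M 0 1) (h10 : X 1 0 = M 1 0 / u ^ 2)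
    (h11 : X 1 1 = M 1 1) :
    X = diagSL u hu * M * (diagSL u hu)⁻¹ :=
  Subtype.ext <| by rw [coe_diagSL_conj, eta_fin_two (X : Matrix (Fin 2) (Fin 2) K)]; simp [*]

theorem diagSL_conj_diagSL (u r : K) (hu : u ≠ 0) (hr : r ≠ 0) :
    diagSL u hu * diagSL r hr * (diagSL u hu)⁻¹ = diagSL r hr :=
  (eq_diagSL_conj_of_apply u hu rfl (by simp) (by simp) rfl).symm

theorem conj_diagSL_apply_eq_zero_iff (u : K) (hu : u ≠ 0) (M : SpecialLinearGroup (Fin 2) K)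
    (i j : Fin 2) :
    (diagSL u hu * M * (diagSL u hu)⁻¹) i j = 0 ↔ M i j = 0 := by
  rw [coe_diagSL_conj]
  fin_cases i <;> fin_cases j <;> simp [hu]

theorem exists_eq_diagSL_of_conj_eq {r : K} (hr : r ≠ 0) (hr2 : r ^ 2 ≠ 1)
    {C : SpecialLinearGroup (Fin 2) K} (hC : C * diagSL r hr * C⁻¹ = diagSL r hr) :
    ∃ u hu, C = diagSL u hu := by
  have hcomm := congrArg (fun M : SpecialLinearGroup (Fin 2) K => (M : Matrix (Fin 2) (Fin 2) K))
    (mul_inv_eq_iff_eq_mul.mp hC)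
  simp only [coe_mul, coe_diagSL] at hcomm
  have hΔ := sub_inv_ne_zero hr hr2
  have h01 : C 0 1 = 0 := by
    have h : C 0 1 * r⁻¹ = r * C 0 1 := by
      simpa [mul_apply, Fin.sum_univ_two] using congrFun (congrFun hcomm 0) 1
    exact (mul_eq_zero.mp (by linear_combination -h : C 0 1 * (r - r⁻¹) = 0)).resolve_right hΔ
  have h10 : C 1 0 = 0 := by
    have h : C 1 0 * r = r⁻¹ * C 1 0 := by
      simpa [mul_apply, Fin.sum_univ_two] using congrFun (congrFun hcomm 1) 0
    exact (mul_eq_zero.mp (by linear_combination h : C 1 0 * (r - r⁻¹) = 0)).resolve_right hΔ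
  have hdet := C.det_coe
  rw [det_fin_two, h01, zero_mul, sub_zero] at hdet
  have hu : C 0 0 ≠ 0 := left_ne_zero_of_mul_eq_one hdet
  refine ⟨C 0 0, hu, Subtype.ext ?_⟩
  rw [coe_diagSL, eta_fin_two (C : Matrix (Fin 2) (Fin 2) K), h01, h10,
    eq_inv_of_mul_eq_one_right hdet]
  rfl

theorem lowSL_eq_conj (s : K) (hs : s ≠ 0) : ∃ C, lowSL s hs = C * diagSL s hs * C⁻¹ := by
  refine ⟨⟨!![1, 0; 1, 1], by simp⟩, eq_mul_inv_iff_mul_eq.mpr (Subtype.ext ?_)⟩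
  change !![s, 0; s - s⁻¹, s⁻¹] * !![1, 0; 1, 1] = !![1, 0; 1, 1] * !![s, 0; 0, s⁻¹]
  simp

theorem upSL_eq_conj (s : K) (hs : s ≠ 0) : ∃ C, upSL s hs = C * diagSL s hs * C⁻¹ := by
  refine ⟨⟨!![1, -1; 0, 1], by simp⟩, eq_mul_inv_iff_mul_eq.mpr (Subtype.ext ?_)⟩
  change !![s, s - s⁻¹; 0, s⁻¹] * !![1, -1; 0, 1] = !![1, -1; 0, 1] * !![s, 0; 0, s⁻¹]
  simp [← sub_eq_neg_add]

theorem disjoint_pairOrbit_diagSL {r : K} (hr : r ≠ 0) (hr2 : r ^ 2 ≠ 1)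
    {P P' : SpecialLinearGroup (Fin 2) K} {i j : Fin 2} (hP : P i j ≠ 0) (hP' : P' i j = 0) :
    Disjoint (pairOrbit P (diagSL r hr)) (pairOrbit P' (diagSL r hr)) :=
  disjoint_pairOrbit_of_forall_conj fun C hC hCP => by
    obtain ⟨u, hu, rfl⟩ := exists_eq_diagSL_of_conj_eq hr hr2 hC
    exact hP ((conj_diagSL_apply_eq_zero_iff u hu P i j).mp (hCP ▸ hP'))

end Diagonal

section Fiber

variable {K : Type*} [Field K] {s r : K} (hs : s ≠ 0) (hr : r ≠ 0)

theorem apply_eq_of_trace_mul_diagSL (hr2 : r ^ 2 ≠ 1) {X : SpecialLinearGroup (Fin 2) K}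
    (htr : trace (X : Matrix (Fin 2) (Fin 2) K) = s + s⁻¹)
    (htr' : trace ((X : Matrix (Fin 2) (Fin 2) K) * (diagSL r hr : Matrix (Fin 2) (Fin 2) K)) =
      s * r + s⁻¹ * r⁻¹) :
    X 0 0 = s ∧ X 1 1 = s⁻¹ := by
  rw [trace_fin_two] at htr
  rw [trace_mul_diagSL] at htr'
  have h00 : (X 0 0 - s) * (r - r⁻¹) = 0 := by linear_combination htr' - r⁻¹ * htr
  have h00 := (mul_eq_zero.mp h00).resolve_right (sub_inv_ne_zero hr hr2)
  exact ⟨by linear_combination h00, by linear_combination htr - h00⟩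

theorem exists_diagSL_conj_of_apply [IsAlgClosed K] (hs2 : s ^ 2 ≠ 1)
    {X : SpecialLinearGroup (Fin 2) K} (h00 : X 0 0 = s) (h11 : X 1 1 = s⁻¹) :
    ∃ u hu, X = diagSL u hu * lowSL s hs * (diagSL u hu)⁻¹ ∨
      X = diagSL u hu * upSL s hs * (diagSL u hu)⁻¹ ∨
      X = diagSL u hu * diagSL s hs * (diagSL u hu)⁻¹ := by
  have hΔ := sub_inv_ne_zero hs hs2
  have hbc : X 0 1 * X 1 0 = 0 := by
    have hdet := X.det_coe
    rw [det_fin_two] at hdet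
    linear_combination X 1 1 * h00 + s * h11 - hdet + mul_inv_cancel₀ hs
  by_cases hc : X 1 0 = 0
  · by_cases hb : X 0 1 = 0
    · exact ⟨1, one_ne_zero, Or.inr <| Or.inr <| eq_diagSL_conj_of_apply 1 one_ne_zero
        (by simp [h00]) (by simp [hb]) (by simp [hc]) (by simp [h11])⟩
    obtain ⟨u, hu2⟩ := IsAlgClosed.exists_pow_nat_eq (X 0 1 / (s - s⁻¹)) two_pos
    have hu : u ≠ 0 := ne_zero_pow two_ne_zero (hu2 ▸ div_ne_zero hb hΔ)
    refine ⟨u, hu, Or.inr <| Or.inl <| eq_diagSL_conj_of_apply u hu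
      (by simp [h00]) ?_ (by simp [hc]) (by simp [h11])⟩
    simp [hu2, hΔ]
  · have hb : X 0 1 = 0 := (mul_eq_zero.mp hbc).resolve_right hc
    obtain ⟨u, hu2⟩ := IsAlgClosed.exists_pow_nat_eq ((s - s⁻¹) / X 1 0) two_pos
    have hu : u ≠ 0 := ne_zero_pow two_ne_zero (hu2 ▸ div_ne_zero hΔ hc)
    refine ⟨u, hu, Or.inl <| eq_diagSL_conj_of_apply u hu
      (by simp [h00]) (by simp [hb]) ?_ (by simp [h11])⟩
    simp [hu2, hΔ]

theorem mk_diagSL_mem_pairOrbit_union [IsAlgClosed K] (hs2 : s ^ 2 ≠ 1) (hr2 : r ^ 2 ≠ 1)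
    {X : SpecialLinearGroup (Fin 2) K}
    (htr : trace (X : Matrix (Fin 2) (Fin 2) K) = s + s⁻¹)
    (htr' : trace ((X : Matrix (Fin 2) (Fin 2) K) * (diagSL r hr : Matrix (Fin 2) (Fin 2) K)) =
      s * r + s⁻¹ * r⁻¹) :
    (X, diagSL r hr) ∈ pairOrbit (lowSL s hs) (diagSL r hr) ∪
      pairOrbit (upSL s hs) (diagSL r hr) ∪ pairOrbit (diagSL s hs) (diagSL r hr) := by
  obtain ⟨h00, h11⟩ := apply_eq_of_trace_mul_diagSL hr hr2 htr htr'
  obtain ⟨u, hu, h | h | h⟩ := exists_diagSL_conj_of_apply hs hs2 h00 h11 <;> rw [h]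
  · exact Or.inl (Or.inl (mk_mem_pairOrbit_of_conj_eq (diagSL_conj_diagSL u r hu hr)))
  · exact Or.inl (Or.inr (mk_mem_pairOrbit_of_conj_eq (diagSL_conj_diagSL u r hu hr)))
  · exact Or.inr (mk_mem_pairOrbit_of_conj_eq (diagSL_conj_diagSL u r hu hr))

end Fiber

/-- The fiber `tr(XY) = sr + s⁻¹r⁻¹` is the union of the three pairwise disjoint orbits
of `([[s,0],[Δ,s⁻¹]], t')`, `([[s,Δ],[0,s⁻¹]], t')`, `(t, t')`. -/
theorem fiber_l0_decomposition {K : Type*} [Field K] [IsAlgClosed K]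
    (s r : K) (hs : s ≠ 0) (hr : r ≠ 0) (hs2 : s ^ 2 ≠ 1) (hr2 : r ^ 2 ≠ 1) :
    ({pq : SpecialLinearGroup (Fin 2) K × SpecialLinearGroup (Fin 2) K |
        (∃ A : SpecialLinearGroup (Fin 2) K, pq.1 = A * diagSL s hs * A⁻¹) ∧
        (∃ A : SpecialLinearGroup (Fin 2) K, pq.2 = A * diagSL r hr * A⁻¹) ∧
        Matrix.trace ((pq.1 : Matrix (Fin 2) (Fin 2) K) * (pq.2 : Matrix (Fin 2) (Fin 2) K)) =
          s * r + s⁻¹ * r⁻¹} =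
      pairOrbit (lowSL s hs) (diagSL r hr) ∪ pairOrbit (upSL s hs) (diagSL r hr) ∪
        pairOrbit (diagSL s hs) (diagSL r hr)) ∧
    Disjoint (pairOrbit (lowSL s hs) (diagSL r hr)) (pairOrbit (upSL s hs) (diagSL r hr)) ∧
    Disjoint (pairOrbit (lowSL s hs) (diagSL r hr)) (pairOrbit (diagSL s hs) (diagSL r hr)) ∧
    Disjoint (pairOrbit (upSL s hs) (diagSL r hr)) (pairOrbit (diagSL s hs) (diagSL r hr)) := by
  have hΔ := sub_inv_ne_zero hs hs2
  refine ⟨subset_antisymm ?_ ?_, ?_, ?_, ?_⟩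
  · rintro ⟨X, Y⟩ ⟨⟨A, hA⟩, ⟨B, rfl⟩, htr⟩
    obtain ⟨X, rfl⟩ : ∃ X', X = B * X' * B⁻¹ := ⟨B⁻¹ * X * B, by group⟩
    have htr₁ : trace (X : Matrix (Fin 2) (Fin 2) K) = s + s⁻¹ := by
      simpa only [trace_coe_conj, trace_diagSL] using
        congrArg (fun M : SpecialLinearGroup (Fin 2) K => trace (M : Matrix (Fin 2) (Fin 2) K)) hA
    rw [trace_coe_conj_mul_coe_conj] at htr
    exact (mk_diagSL_mem_pairOrbit_union hs hr hs2 hr2 htr₁ htr).imp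
      (Or.imp (conj_mem_pairOrbit B) (conj_mem_pairOrbit B)) (conj_mem_pairOrbit B)
  · have hself (M : SpecialLinearGroup (Fin 2) K) : ∃ C, M = C * M * C⁻¹ := ⟨1, by group⟩
    exact Set.union_subset (Set.union_subset
      (pairOrbit_subset_of_conj (lowSL_eq_conj s hs) (hself _) (by rw [trace_mul_diagSL]; simp))
      (pairOrbit_subset_of_conj (upSL_eq_conj s hs) (hself _) (by rw [trace_mul_diagSL]; simp)))
      (pairOrbit_subset_of_conj (hself _) (hself _) (by rw [trace_mul_diagSL]; simp))
  · exact disjoint_pairOrbit_diagSL hr hr2 (i := 1) (j := 0) (by simpa using hΔ) (by simp)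
  · exact disjoint_pairOrbit_diagSL hr hr2 (i := 1) (j := 0) (by simpa using hΔ) (by simp)
  · exact disjoint_pairOrbit_diagSL hr hr2 (i := 0) (j := 1) (by simpa using hΔ) (by simp)
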